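/- Let A → B be a ring extension such that B is faithfully flat as a left A-module. Then the Amitsur complex 0 → A → B → B ⊗_A B → B ⊗_A B ⊗_A B → ⋯ with differentials d(x) = 1⊗x − x⊗1 on degree 0 and d(ω) = Σ_{i=0}^{n+1} (-1)^i (insertion of 1 in the i-th slot) in higher degrees, is exact. -/

import Mathlib

open TensorProduct

universe u

variable (A : Type u) [CommRing A] (B : Type u) [CommRing B] [Algebra A B]

/-- Iterated tensor powers: `T n = B^{⊗_A (n+1)}`, the degree-`n` term of the
Amitsur complex of `A → B`. -/
noncomputable def amitsurT : ℕ → ModuleCat.{u} A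
  | 0 => ModuleCat.of A B
  | n + 1 => ModuleCat.of A (B ⊗[A] (amitsurT n))

/-- Insertion of `1_B` into the `i`-th of the `n+2` tensor positions,
`T n → T (n+1)`. -/
noncomputable def amitsurIns : (n : ℕ) → Fin (n + 2) → (amitsurT A B n →ₗ[A] amitsurT A B (n + 1))
  | _, ⟨0, _⟩ => TensorProduct.mk A B _ 1
  | 0, ⟨1, _⟩ => (TensorProduct.mk A B B).flip 1
  | n + 1, ⟨k + 1, h⟩ => LinearMap.lTensor B (amitsurIns n ⟨k, by omega⟩)
  | 0, ⟨k + 2, h⟩ => absurd h (by omega)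

/-- The Amitsur differential `d : T n → T (n+1)`, the alternating sum of the
insertions of `1_B`; in degree `0` it is `x ↦ 1 ⊗ x − x ⊗ 1`. -/
noncomputable def amitsurD (n : ℕ) : amitsurT A B n →ₗ[A] amitsurT A B (n + 1) :=
  ∑ i : Fin (n + 2), ((-1 : ℤ) ^ (i : ℕ)) • amitsurIns A B n i

/-!
After base change along `A → B` the Amitsur complex becomes contractible: multiplying the first
two tensor factors, `b ⊗ b' ⊗ ω ↦ bb' ⊗ ω`, is a contracting homotopy of `B ⊗_A T•`, since it is
left inverse to the insertion of `1` in front and commutes with `B ⊗ -` applied to any map. So the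
base-changed complex is exact, and faithful flatness of `B` reflects this exactness back to `T•`.
-/

open LinearMap

section Homotopy

variable {R : Type*} [CommRing R] {M N P : Type*} [AddCommGroup M] [Module R M]
  [AddCommGroup N] [Module R N] [AddCommGroup P] [Module R P]

theorem LinearMap.exact_of_comp_eq_zero_of_homotopy {f : M →ₗ[R] N} {g : N →ₗ[R] P}
    (hgf : g ∘ₗ f = 0) (h : P →ₗ[R] N) (k : N →ₗ[R] M) (hid : h ∘ₗ g + f ∘ₗ k = LinearMap.id) :
    Function.Exact f g :=
  exact_of_comp_eq_zero_of_ker_le_range hgf fun y hy ↦ ⟨k y, by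
    simpa [show g y = 0 from hy] using congr($hid y)⟩

theorem Module.FaithfullyFlat.exact_of_lTensor_homotopy (S : Type*) [AddCommGroup S] [Module R S]
    [Module.FaithfullyFlat R S] {f : M →ₗ[R] N} {g : N →ₗ[R] P} (hgf : g ∘ₗ f = 0)
    (h : S ⊗[R] P →ₗ[R] S ⊗[R] N) (k : S ⊗[R] N →ₗ[R] S ⊗[R] M)
    (hid : h ∘ₗ g.lTensor S + f.lTensor S ∘ₗ k = LinearMap.id) : Function.Exact f g :=
  lTensor_reflects_exact R S f g <| exact_of_comp_eq_zero_of_homotopy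
    (by rw [← lTensor_comp, hgf, lTensor_zero]) h k hid

end Homotopy

section MulLeftFactors

variable (R : Type*) [CommRing R] (S : Type*) [CommRing S] [Algebra R S]
  (M : Type*) [AddCommGroup M] [Module R M]

noncomputable def TensorProduct.mulLeftFactors : S ⊗[R] (S ⊗[R] M) →ₗ[R] S ⊗[R] M :=
  rTensor M (mul' R S) ∘ₗ (TensorProduct.assoc R S S M).symm.toLinearMap

variable {R S M}

@[simp]
theorem TensorProduct.mulLeftFactors_tmul (s s' : S) (m : M) :
    mulLeftFactors R S M (s ⊗ₜ (s' ⊗ₜ m)) = (s * s') ⊗ₜ m := by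
  simp [mulLeftFactors]

theorem TensorProduct.mulLeftFactors_comp_lTensor_mk_one :
    mulLeftFactors R S M ∘ₗ lTensor S (mk R S M 1) = LinearMap.id := by
  ext s m
  simp

theorem TensorProduct.mulLeftFactors_comp_lTensor_lTensor {N : Type*} [AddCommGroup N]
    [Module R N] (f : M →ₗ[R] N) :
    mulLeftFactors R S N ∘ₗ lTensor S (lTensor S f) = lTensor S f ∘ₗ mulLeftFactors R S M := by
  ext s s' m
  simp

end MulLeftFactors

section Amitsur

variable {A B}

/-- `lTensor B f` and `mulLeftFactors` below, retyped as maps between the terms `amitsurT`: the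
types agree only up to unfolding `amitsurT`, which `rw` does not see through. -/
noncomputable def amitsurLTensor {n m : ℕ} :
    (amitsurT A B n →ₗ[A] amitsurT A B m) →ₗ[A] amitsurT A B (n + 1) →ₗ[A] amitsurT A B (m + 1) :=
  lTensorHom B

noncomputable def amitsurMul (n : ℕ) : amitsurT A B (n + 2) →ₗ[A] amitsurT A B (n + 1) :=
  mulLeftFactors A B (amitsurT A B n)

theorem amitsurLTensor_comp {n m k : ℕ} (f : amitsurT A B m →ₗ[A] amitsurT A B k)
    (g : amitsurT A B n →ₗ[A] amitsurT A B m) :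
    amitsurLTensor (f ∘ₗ g) = amitsurLTensor f ∘ₗ amitsurLTensor g :=
  lTensor_comp B f g

theorem amitsurIns_succ (n : ℕ) (i : Fin (n + 2)) :
    amitsurIns A B (n + 1) i.succ = amitsurLTensor (amitsurIns A B n i) := by
  obtain ⟨_ | _ | i, _⟩ := i <;> cases n <;> rfl

theorem amitsurIns_zero_comp {n m : ℕ} (f : amitsurT A B n →ₗ[A] amitsurT A B m) :
    amitsurIns A B m 0 ∘ₗ f = amitsurLTensor f ∘ₗ amitsurIns A B n 0 := by
  cases n <;> cases m <;> rfl

theorem amitsurD_zero : amitsurD A B 0 = amitsurIns A B 0 0 - amitsurIns A B 0 1 := by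
  rw [amitsurD, Fin.sum_univ_two]
  simp only [Fin.val_zero, Fin.val_one, pow_zero, pow_one, one_smul, neg_smul, ← sub_eq_add_neg]

theorem amitsurD_succ (n : ℕ) :
    amitsurD A B (n + 1) = amitsurIns A B (n + 1) 0 - amitsurLTensor (amitsurD A B n) := by
  rw [amitsurD, Fin.sum_univ_succ, amitsurD, map_sum]
  simp only [Fin.val_zero, pow_zero, one_smul, Fin.val_succ, pow_succ, mul_neg_one, neg_smul,
    amitsurIns_succ, map_zsmul, Finset.sum_neg_distrib, ← sub_eq_add_neg]

theorem amitsurD_zero_one : amitsurD A B 0 (1 : B) = 0 := by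
  rw [amitsurD_zero]
  exact sub_self ((1 : B) ⊗ₜ[A] (1 : B))

theorem amitsurD_comp_algebraMap : amitsurD A B 0 ∘ₗ Algebra.linearMap A B = 0 := by
  ext
  exact (congrArg (amitsurD A B 0) (map_one (algebraMap A B))).trans amitsurD_zero_one

theorem amitsurD_succ_comp_amitsurD_eq (n : ℕ) :
    amitsurD A B (n + 1) ∘ₗ amitsurD A B n =
      amitsurLTensor (amitsurD A B n) ∘ₗ (amitsurIns A B n 0 - amitsurD A B n) := by
  rw [amitsurD_succ, sub_comp, amitsurIns_zero_comp, comp_sub]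

theorem amitsurD_succ_comp_amitsurD (n : ℕ) : amitsurD A B (n + 1) ∘ₗ amitsurD A B n = 0 := by
  induction n with
  | zero =>
    rw [amitsurD_succ_comp_amitsurD_eq,
      show amitsurIns A B 0 0 - amitsurD A B 0 = amitsurIns A B 0 1 by
        rw [amitsurD_zero, sub_sub_cancel]]
    ext x
    show x ⊗ₜ[A] amitsurD A B 0 (1 : B) = 0
    rw [amitsurD_zero_one, tmul_zero]
  | succ n ih =>
    rw [amitsurD_succ_comp_amitsurD_eq,
      show amitsurIns A B (n + 1) 0 - amitsurD A B (n + 1) = amitsurLTensor (amitsurD A B n) by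
        rw [amitsurD_succ, sub_sub_cancel],
      ← amitsurLTensor_comp, ih, map_zero]

theorem amitsurMul_comp_amitsurLTensor_amitsurIns_zero (n : ℕ) :
    amitsurMul n ∘ₗ amitsurLTensor (amitsurIns A B n 0) = LinearMap.id := by
  cases n <;> exact mulLeftFactors_comp_lTensor_mk_one

theorem amitsurMul_comp_amitsurLTensor_amitsurLTensor {n m : ℕ}
    (f : amitsurT A B n →ₗ[A] amitsurT A B m) :
    amitsurMul m ∘ₗ amitsurLTensor (amitsurLTensor f) = amitsurLTensor f ∘ₗ amitsurMul n :=
  mulLeftFactors_comp_lTensor_lTensor f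

theorem amitsurMul_homotopy (n : ℕ) :
    amitsurMul (n + 1) ∘ₗ amitsurLTensor (amitsurD A B (n + 1)) +
      amitsurLTensor (amitsurD A B n) ∘ₗ amitsurMul n = LinearMap.id := by
  rw [amitsurD_succ, map_sub, comp_sub, amitsurMul_comp_amitsurLTensor_amitsurIns_zero,
    amitsurMul_comp_amitsurLTensor_amitsurLTensor, sub_add_cancel]

theorem mulLeftFactors_homotopy_zero :
    mulLeftFactors A B B ∘ₗ lTensor B (mk A B B 1 - (mk A B B).flip 1) +
      lTensor B (Algebra.linearMap A B) ∘ₗ (TensorProduct.rid A B).symm.toLinearMap ∘ₗ mul' A B =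
      LinearMap.id := by
  ext b x
  simp

theorem amitsurD_exact_zero [Module.FaithfullyFlat A B] :
    Function.Exact (Algebra.linearMap A B) (amitsurD A B 0) := by
  refine Module.FaithfullyFlat.exact_of_lTensor_homotopy B amitsurD_comp_algebraMap
    (mulLeftFactors A B B) ((TensorProduct.rid A B).symm.toLinearMap ∘ₗ mul' A B) ?_
  rw [amitsurD_zero]
  exact mulLeftFactors_homotopy_zero

theorem amitsurD_exact_succ [Module.FaithfullyFlat A B] (n : ℕ) :
    Function.Exact (amitsurD A B n) (amitsurD A B (n + 1)) :=
  Module.FaithfullyFlat.exact_of_lTensor_homotopy B (amitsurD_succ_comp_amitsurD n) _ _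
    (amitsurMul_homotopy n)

end Amitsur

/-- If `B` is a faithfully flat `A`-algebra, the Amitsur complex
`0 → A → B → B ⊗_A B → B ⊗_A B ⊗_A B → ⋯` is exact. -/
theorem amitsur_complex_exact [Module.FaithfullyFlat A B] :
    Function.Injective (algebraMap A B) ∧
    Function.Exact (Algebra.linearMap A B) (amitsurD A B 0) ∧
    ∀ n : ℕ, Function.Exact (amitsurD A B n) (amitsurD A B (n + 1)) :=
  ⟨FaithfulSMul.algebraMap_injective A B, amitsurD_exact_zero, amitsurD_exact_succ⟩
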